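/- The Gauss–Mainardi–Codazzi equations hold: p_β + q_α + H∘·K∘ = 0, (H∘)_β = p·K∘, and (K∘)_α = q·H∘. -/

import Mathlib

noncomputable section

/-- Vectors in ℝ³. -/
abbrev V3 : Type := Fin 3 → ℝ

/-- Euclidean dot product on ℝ³. -/
def dot3 (a b : V3) : ℝ := a 0 * b 0 + a 1 * b 1 + a 2 * b 2

/-- Cross product on ℝ³. -/
def cross3 (a b : V3) : V3 :=
  ![a 1 * b 2 - a 2 * b 1, a 2 * b 0 - a 0 * b 2, a 0 * b 1 - a 1 * b 0]

/-- Euclidean norm on ℝ³. -/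
def norm3 (a : V3) : ℝ := Real.sqrt (dot3 a a)

/-- Partial derivative in the first (α) direction. -/
def pd1 {E : Type*} [NormedAddCommGroup E] [NormedSpace ℝ E]
    (f : ℝ × ℝ → E) (x : ℝ × ℝ) : E := fderiv ℝ f x (1, 0)

/-- Partial derivative in the second (β) direction. -/
def pd2 {E : Type*} [NormedAddCommGroup E] [NormedSpace ℝ E]
    (f : ℝ × ℝ → E) (x : ℝ × ℝ) : E := fderiv ℝ f x (0, 1)

def A₁ (r : ℝ × ℝ → V3) (x : ℝ × ℝ) : ℝ := norm3 (pd1 r x)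
def A₂ (r : ℝ × ℝ → V3) (x : ℝ × ℝ) : ℝ := norm3 (pd2 r x)
def e₁ (r : ℝ × ℝ → V3) (x : ℝ × ℝ) : V3 := (A₁ r x)⁻¹ • pd1 r x
def e₂ (r : ℝ × ℝ → V3) (x : ℝ × ℝ) : V3 := (A₂ r x)⁻¹ • pd2 r x
/-- Unit normal N = e₁ × e₂. -/
def NN (r : ℝ × ℝ → V3) (x : ℝ × ℝ) : V3 := cross3 (e₁ r x) (e₂ r x)
/-- p = (A₁)_β / A₂. -/
def pp (r : ℝ × ℝ → V3) (x : ℝ × ℝ) : ℝ := pd2 (A₁ r) x / A₂ r x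
/-- q = (A₂)_α / A₁. -/
def qq (r : ℝ × ℝ → V3) (x : ℝ × ℝ) : ℝ := pd1 (A₂ r) x / A₁ r x
/-- H∘ = −κ₁ A₁. -/
def Ho (r : ℝ × ℝ → V3) (κ₁ : ℝ × ℝ → ℝ) (x : ℝ × ℝ) : ℝ := -κ₁ x * A₁ r x
/-- K∘ = −κ₂ A₂. -/
def Ko (r : ℝ × ℝ → V3) (κ₂ : ℝ × ℝ → ℝ) (x : ℝ × ℝ) : ℝ := -κ₂ x * A₂ r x

/-- Surface divergence of the tangential field f₁·e₁ + f₂·e₂. -/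
def sdiv (r : ℝ × ℝ → V3) (f₁ f₂ : ℝ × ℝ → ℝ) (x : ℝ × ℝ) : ℝ :=
  (pd1 (fun y => f₁ y * A₂ r y) x + pd2 (fun y => f₂ y * A₁ r y) x) / (A₁ r x * A₂ r x)

/-- Surface gradient ∇f = (f_α/A₁)·e₁ + (f_β/A₂)·e₂. -/
def sgrad (r : ℝ × ℝ → V3) (f : ℝ × ℝ → ℝ) (x : ℝ × ℝ) : V3 :=
  (pd1 f x / A₁ r x) • e₁ r x + (pd2 f x / A₂ r x) • e₂ r x


/-- Variation vector field V = v₁·e₁ + v₂·e₂ + v_n·N. -/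
def Vfield (r : ℝ × ℝ → V3) (v₁ v₂ v_n : ℝ × ℝ → ℝ) (y : ℝ × ℝ) : V3 :=
  v₁ y • e₁ r y + v₂ y • e₂ r y + v_n y • NN r y

/-- The deformed surface R(t) = r + t·V. -/
def Rt (r Vf : ℝ × ℝ → V3) (t : ℝ) (y : ℝ × ℝ) : V3 := r y + t • Vf y

/-- Infinitesimal strain ε̄₁ = ((v₁)_α + p v₂ + H∘ v_n)/A₁. -/
def eps1 (r : ℝ × ℝ → V3) (κ₁ : ℝ × ℝ → ℝ) (v₁ v₂ v_n : ℝ × ℝ → ℝ) (x : ℝ × ℝ) : ℝ :=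
  (pd1 v₁ x + pp r x * v₂ x + Ho r κ₁ x * v_n x) / A₁ r x

/-- Infinitesimal strain ε̄₂ = ((v₂)_β + q v₁ + K∘ v_n)/A₂. -/
def eps2 (r : ℝ × ℝ → V3) (κ₂ : ℝ × ℝ → ℝ) (v₁ v₂ v_n : ℝ × ℝ → ℝ) (x : ℝ × ℝ) : ℝ :=
  (pd2 v₂ x + qq r x * v₁ x + Ko r κ₂ x * v_n x) / A₂ r x

/-- Infinitesimal rotation ϑ̄ = (−(v_n)_α + H∘ v₁)/A₁. -/
def thb (r : ℝ × ℝ → V3) (κ₁ : ℝ × ℝ → ℝ) (v₁ v_n : ℝ × ℝ → ℝ) (x : ℝ × ℝ) : ℝ :=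
  (-(pd1 v_n x) + Ho r κ₁ x * v₁ x) / A₁ r x

/-- Infinitesimal rotation ψ̄ = (−(v_n)_β + K∘ v₂)/A₂. -/
def psb (r : ℝ × ℝ → V3) (κ₂ : ℝ × ℝ → ℝ) (v₂ v_n : ℝ × ℝ → ℝ) (x : ℝ × ℝ) : ℝ :=
  (-(pd2 v_n x) + Ko r κ₂ x * v₂ x) / A₂ r x

/-- Shear ω₁ = (v_α − p u)/A₁. -/
def om1 (r : ℝ × ℝ → V3) (u v : ℝ × ℝ → ℝ) (x : ℝ × ℝ) : ℝ :=
  (pd1 v x - pp r x * u x) / A₁ r x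

/-- Shear ω₂ = (u_β − q v)/A₂. -/
def om2 (r : ℝ × ℝ → V3) (u v : ℝ × ℝ → ℝ) (x : ℝ × ℝ) : ℝ :=
  (pd2 u x - qq r x * v x) / A₂ r x

/-- First fundamental form coefficient E. -/
def EE (R : ℝ × ℝ → V3) (x : ℝ × ℝ) : ℝ := dot3 (pd1 R x) (pd1 R x)
/-- First fundamental form coefficient F. -/
def FF (R : ℝ × ℝ → V3) (x : ℝ × ℝ) : ℝ := dot3 (pd1 R x) (pd2 R x)
/-- First fundamental form coefficient G. -/
def GG (R : ℝ × ℝ → V3) (x : ℝ × ℝ) : ℝ := dot3 (pd2 R x) (pd2 R x)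
/-- Unit normal of a parametrized surface. -/
def unitN (R : ℝ × ℝ → V3) (x : ℝ × ℝ) : V3 :=
  (norm3 (cross3 (pd1 R x) (pd2 R x)))⁻¹ • cross3 (pd1 R x) (pd2 R x)
/-- Second fundamental form coefficient e = N·R_αα. -/
def ee (R : ℝ × ℝ → V3) (x : ℝ × ℝ) : ℝ := dot3 (unitN R x) (pd1 (pd1 R) x)
/-- Second fundamental form coefficient f = N·R_αβ. -/
def ff (R : ℝ × ℝ → V3) (x : ℝ × ℝ) : ℝ := dot3 (unitN R x) (pd2 (pd1 R) x)
/-- Second fundamental form coefficient g = N·R_ββ. -/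
def gg (R : ℝ × ℝ → V3) (x : ℝ × ℝ) : ℝ := dot3 (unitN R x) (pd2 (pd2 R) x)
/-- Mean curvature H = (eG − 2fF + gE)/(2(EG − F²)). -/
def meanH (R : ℝ × ℝ → V3) (x : ℝ × ℝ) : ℝ :=
  (ee R x * GG R x - 2 * ff R x * FF R x + gg R x * EE R x) /
    (2 * (EE R x * GG R x - FF R x ^ 2))
/-- κ̃₁ = −(N_α·R_α)/‖R_α‖². -/
def princ1 (R : ℝ × ℝ → V3) (x : ℝ × ℝ) : ℝ :=
  -(dot3 (pd1 (unitN R) x) (pd1 R x)) / (norm3 (pd1 R x)) ^ 2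
/-- κ̃₂ = −(N_β·R_β)/‖R_β‖². -/
def princ2 (R : ℝ × ℝ → V3) (x : ℝ × ℝ) : ℝ :=
  -(dot3 (pd2 (unitN R) x) (pd2 R x)) / (norm3 (pd2 R x)) ^ 2

/-- Linear Weingarten functional integrand (a·H + b)·dA + (c/3)·R·(R_α × R_β). -/
def Phi (a b c : ℝ) (R : ℝ × ℝ → V3) (x : ℝ × ℝ) : ℝ :=
  (a * meanH R x + b) * norm3 (cross3 (pd1 R x) (pd2 R x)) +
    c / 3 * dot3 (R x) (cross3 (pd1 R x) (pd2 R x))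


open scoped ContDiff

/-! ### dot3 / cross3 algebra -/

lemma dot3_comm (a b : V3) : dot3 a b = dot3 b a := by simp [dot3]; ring

lemma dot3_smul_left (t : ℝ) (a b : V3) : dot3 (t • a) b = t * dot3 a b := by
  simp [dot3]; ring

lemma dot3_smul_right (t : ℝ) (a b : V3) : dot3 a (t • b) = t * dot3 a b := by
  simp [dot3]; ring

lemma dot3_add_left (a b c : V3) : dot3 (a + b) c = dot3 a c + dot3 b c := by
  simp [dot3]; ring

lemma dot3_add_right (a b c : V3) : dot3 a (b + c) = dot3 a b + dot3 a c := by
  simp [dot3]; ring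

lemma dot3_self_nonneg (a : V3) : 0 ≤ dot3 a a := by
  simp only [dot3]; nlinarith [sq_nonneg (a 0), sq_nonneg (a 1), sq_nonneg (a 2)]

lemma dot3_self_pos {a : V3} (h : a ≠ 0) : 0 < dot3 a a := by
  rcases (dot3_self_nonneg a).lt_or_eq with h' | h'
  · exact h'
  · exfalso; apply h; funext i
    have h0 : a 0 * a 0 + a 1 * a 1 + a 2 * a 2 = 0 := by simpa [dot3] using h'.symm
    have : a 0 = 0 ∧ a 1 = 0 ∧ a 2 = 0 := by
      refine ⟨?_, ?_, ?_⟩ <;> nlinarith [sq_nonneg (a 0), sq_nonneg (a 1), sq_nonneg (a 2)]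
    fin_cases i <;> simp [this.1, this.2.1, this.2.2]

lemma cross3_dot_left (a b : V3) : dot3 (cross3 a b) a = 0 := by
  simp [dot3, cross3]; ring

lemma cross3_dot_right (a b : V3) : dot3 (cross3 a b) b = 0 := by
  simp [dot3, cross3]; ring

lemma cross3_lagrange (a b : V3) :
    dot3 (cross3 a b) (cross3 a b) = dot3 a a * dot3 b b - (dot3 a b) ^ 2 := by
  simp [dot3, cross3]; ring

lemma decomp_generic (a b v : V3) :
    (dot3 a a * dot3 b b - (dot3 a b) ^ 2) • v =
      (dot3 v a * dot3 b b - dot3 v b * dot3 a b) • a +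
      (dot3 v b * dot3 a a - dot3 v a * dot3 a b) • b +
      dot3 v (cross3 a b) • cross3 a b := by
  funext i
  fin_cases i <;> · simp [dot3, cross3]; ring

lemma frame_decomp {e1 e2 : V3} (h1 : dot3 e1 e1 = 1) (h2 : dot3 e2 e2 = 1)
    (h12 : dot3 e1 e2 = 0) (v : V3) :
    v = dot3 v e1 • e1 + dot3 v e2 • e2 + dot3 v (cross3 e1 e2) • cross3 e1 e2 := by
  have := decomp_generic e1 e2 v
  rw [h1, h2, h12] at this
  simpa using this

/-! ### calculus helpers -/

section Calc

variable {x : ℝ × ℝ} {v : ℝ × ℝ}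

/-- component of derivative -/
lemma fderiv_apply_comp {f : ℝ × ℝ → V3} (hf : DifferentiableAt ℝ f x) (i : Fin 3)
    (v : ℝ × ℝ) :
    fderiv ℝ (fun y => f y i) x v = fderiv ℝ f x v i := by
  have h : HasFDerivAt (fun y => f y i)
      ((ContinuousLinearMap.proj (R := ℝ) (φ := fun _ : Fin 3 => ℝ) i).comp (fderiv ℝ f x)) x := by
    simpa [Function.comp_def] using
      ((ContinuousLinearMap.proj (R := ℝ) (φ := fun _ : Fin 3 => ℝ) i).hasFDerivAt.comp x
        hf.hasFDerivAt)
  rw [h.fderiv]; rfl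

lemma diffAt_comp_apply {f : ℝ × ℝ → V3} (hf : DifferentiableAt ℝ f x) (i : Fin 3) :
    DifferentiableAt ℝ (fun y => f y i) x := by
  simpa [Function.comp_def] using
    ((ContinuousLinearMap.proj (R := ℝ) (φ := fun _ : Fin 3 => ℝ) i).hasFDerivAt.comp x
      hf.hasFDerivAt).differentiableAt

lemma contDiffAt_comp_apply {f : ℝ × ℝ → V3} (hf : ContDiffAt ℝ ∞ f x) (i : Fin 3) :
    ContDiffAt ℝ ∞ (fun y => f y i) x := by
  simpa [Function.comp_def] using
    (ContinuousLinearMap.proj (R := ℝ) (φ := fun _ : Fin 3 => ℝ) i).contDiff.comp_contDiffAt x hf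

lemma fderiv_mul_apply {f g : ℝ × ℝ → ℝ} (hf : DifferentiableAt ℝ f x)
    (hg : DifferentiableAt ℝ g x) (v : ℝ × ℝ) :
    fderiv ℝ (fun y => f y * g y) x v = fderiv ℝ f x v * g x + f x * fderiv ℝ g x v := by
  rw [fderiv_fun_mul hf hg]; simp; ring

lemma fderiv_smul_apply {f : ℝ × ℝ → ℝ} {g : ℝ × ℝ → V3} (hf : DifferentiableAt ℝ f x)
    (hg : DifferentiableAt ℝ g x) (v : ℝ × ℝ) :
    fderiv ℝ (fun y => f y • g y) x v = fderiv ℝ f x v • g x + f x • fderiv ℝ g x v := by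
  rw [fderiv_fun_smul hf hg]; simp [add_comm]

lemma fderiv_dot3_apply {f g : ℝ × ℝ → V3} (hf : DifferentiableAt ℝ f x)
    (hg : DifferentiableAt ℝ g x) (v : ℝ × ℝ) :
    fderiv ℝ (fun y => dot3 (f y) (g y)) x v =
      dot3 (fderiv ℝ f x v) (g x) + dot3 (f x) (fderiv ℝ g x v) := by
  have h : (fun y => dot3 (f y) (g y)) =
      fun y => (f y 0) * (g y 0) + ((f y 1) * (g y 1) + (f y 2) * (g y 2)) := by
    funext y; simp [dot3]; ring
  rw [h]
  have d : ∀ i : Fin 3, DifferentiableAt ℝ (fun y => f y i * g y i) x := fun i =>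
    (diffAt_comp_apply hf i).mul (diffAt_comp_apply hg i)
  rw [fderiv_fun_add (d 0) ((d 1).fun_add (d 2)), fderiv_fun_add (d 1) (d 2)]
  simp only [ContinuousLinearMap.add_apply]
  rw [fderiv_mul_apply (diffAt_comp_apply hf 0) (diffAt_comp_apply hg 0),
    fderiv_mul_apply (diffAt_comp_apply hf 1) (diffAt_comp_apply hg 1),
    fderiv_mul_apply (diffAt_comp_apply hf 2) (diffAt_comp_apply hg 2),
    fderiv_apply_comp hf, fderiv_apply_comp hf, fderiv_apply_comp hf,
    fderiv_apply_comp hg, fderiv_apply_comp hg, fderiv_apply_comp hg]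
  simp [dot3]; ring

lemma contDiffAt_dot3 {f g : ℝ × ℝ → V3} (hf : ContDiffAt ℝ ∞ f x)
    (hg : ContDiffAt ℝ ∞ g x) :
    ContDiffAt ℝ ∞ (fun y => dot3 (f y) (g y)) x := by
  have : (fun y => dot3 (f y) (g y)) =
      fun y => (f y 0) * (g y 0) + (f y 1) * (g y 1) + (f y 2) * (g y 2) := rfl
  rw [this]
  exact (((contDiffAt_comp_apply hf 0).mul (contDiffAt_comp_apply hg 0)).add
    ((contDiffAt_comp_apply hf 1).mul (contDiffAt_comp_apply hg 1))).add
    ((contDiffAt_comp_apply hf 2).mul (contDiffAt_comp_apply hg 2))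

lemma contDiffAt_cross3 {f g : ℝ × ℝ → V3} (hf : ContDiffAt ℝ ∞ f x)
    (hg : ContDiffAt ℝ ∞ g x) :
    ContDiffAt ℝ ∞ (fun y => cross3 (f y) (g y)) x := by
  rw [contDiffAt_pi]
  intro i
  fin_cases i <;>
    simp only [cross3, Matrix.cons_val_zero, Matrix.cons_val_one, Matrix.head_cons,
      Matrix.cons_val_two, Matrix.tail_cons] <;>
  · exact ((contDiffAt_comp_apply hf _).mul (contDiffAt_comp_apply hg _)).sub
      ((contDiffAt_comp_apply hf _).mul (contDiffAt_comp_apply hg _))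

lemma contDiffAt_pd1 {f : ℝ × ℝ → V3} (hf : ContDiffAt ℝ ∞ f x) :
    ContDiffAt ℝ ∞ (pd1 f) x := by
  have h : ContDiffAt ℝ ∞ (fderiv ℝ f) x := hf.fderiv_right (le_refl _)
  exact h.clm_apply contDiffAt_const

lemma contDiffAt_pd2 {f : ℝ × ℝ → V3} (hf : ContDiffAt ℝ ∞ f x) :
    ContDiffAt ℝ ∞ (pd2 f) x := by
  have h : ContDiffAt ℝ ∞ (fderiv ℝ f) x := hf.fderiv_right (le_refl _)
  exact h.clm_apply contDiffAt_const

end Calc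

section Symm

variable {E : Type*} [NormedAddCommGroup E] [NormedSpace ℝ E] {x : ℝ × ℝ}

lemma hle1 : (∞ : WithTop ℕ∞) ≠ 0 := by simp
lemma hle2 : minSmoothness ℝ 2 ≤ ∞ := by
  rw [minSmoothness_of_isRCLikeNormedField]; exact WithTop.coe_le_coe.mpr le_top

lemma fderiv_fderiv_apply {f : ℝ × ℝ → E} (hf : DifferentiableAt ℝ (fderiv ℝ f) x)
    (v w : ℝ × ℝ) :
    fderiv ℝ (fun y => fderiv ℝ f y v) x w = fderiv ℝ (fderiv ℝ f) x w v := by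
  rw [fderiv_clm_apply hf (differentiableAt_const v)]
  simp

lemma pd_symm {f : ℝ × ℝ → E} (hf : ContDiffAt ℝ ∞ f x) :
    pd2 (pd1 f) x = pd1 (pd2 f) x := by
  have hd : DifferentiableAt ℝ (fderiv ℝ f) x :=
    (hf.fderiv_right (m := ∞) (le_refl _)).differentiableAt hle1
  have hsym := hf.isSymmSndFDerivAt hle2
  show fderiv ℝ (fun y => fderiv ℝ f y (1, 0)) x (0, 1)
      = fderiv ℝ (fun y => fderiv ℝ f y (0, 1)) x (1, 0)
  rw [fderiv_fderiv_apply hd, fderiv_fderiv_apply hd]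
  exact hsym.eq _ _

lemma contDiffAt_pd1' {f : ℝ × ℝ → E} (hf : ContDiffAt ℝ ∞ f x) :
    ContDiffAt ℝ ∞ (pd1 f) x :=
  (hf.fderiv_right (le_refl _)).clm_apply contDiffAt_const

lemma contDiffAt_pd2' {f : ℝ × ℝ → E} (hf : ContDiffAt ℝ ∞ f x) :
    ContDiffAt ℝ ∞ (pd2 f) x :=
  (hf.fderiv_right (le_refl _)).clm_apply contDiffAt_const

lemma cross3_smul_left (t : ℝ) (a b : V3) : cross3 (t • a) b = t • cross3 a b := by
  funext i; fin_cases i <;> · simp [cross3]; ring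

lemma cross3_smul_right (t : ℝ) (a b : V3) : cross3 a (t • b) = t • cross3 a b := by
  funext i; fin_cases i <;> · simp [cross3]; ring

end Symm

lemma pd1_def {E : Type*} [NormedAddCommGroup E] [NormedSpace ℝ E] (f : ℝ × ℝ → E) (x : ℝ × ℝ) :
    pd1 f x = fderiv ℝ f x (1, 0) := rfl

lemma pd2_def {E : Type*} [NormedAddCommGroup E] [NormedSpace ℝ E] (f : ℝ × ℝ → E) (x : ℝ × ℝ) :
    pd2 f x = fderiv ℝ f x (0, 1) := rfl

theorem stmt_1
    (U : Set (ℝ × ℝ)) (hU : IsOpen U)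
    (r : ℝ × ℝ → V3) (hr : ContDiffOn ℝ (⊤ : ℕ∞) r U)
    (hne1 : ∀ x ∈ U, pd1 r x ≠ 0) (hne2 : ∀ x ∈ U, pd2 r x ≠ 0)
    (horth : ∀ x ∈ U, dot3 (pd1 r x) (pd2 r x) = 0)
    (κ₁ κ₂ : ℝ × ℝ → ℝ) (hκ₁ : ContDiffOn ℝ (⊤ : ℕ∞) κ₁ U) (hκ₂ : ContDiffOn ℝ (⊤ : ℕ∞) κ₂ U)
    (hN1 : ∀ x ∈ U, pd1 (NN r) x = (-κ₁ x) • pd1 r x)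
    (hN2 : ∀ x ∈ U, pd2 (NN r) x = (-κ₂ x) • pd2 r x)
 :
    ∀ x ∈ U,
      pd2 (pp r) x + pd1 (qq r) x + Ho r κ₁ x * Ko r κ₂ x = 0 ∧
      pd2 (Ho r κ₁) x = pp r x * Ko r κ₂ x ∧
      pd1 (Ko r κ₂) x = qq r x * Ho r κ₁ x := by
  -- basic smoothness
  have hr' : ∀ x ∈ U, ContDiffAt ℝ ∞ r x := fun x hx =>
    (hr.of_le (by simp)).contDiffAt (hU.mem_nhds hx)
  have hk1 : ∀ x ∈ U, ContDiffAt ℝ ∞ κ₁ x := fun x hx =>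
    (hκ₁.of_le (by simp)).contDiffAt (hU.mem_nhds hx)
  have hk2 : ∀ x ∈ U, ContDiffAt ℝ ∞ κ₂ x := fun x hx =>
    (hκ₂.of_le (by simp)).contDiffAt (hU.mem_nhds hx)
  have hac : ∀ x ∈ U, ContDiffAt ℝ ∞ (pd1 r) x := fun x hx => contDiffAt_pd1' (hr' x hx)
  have hbc : ∀ x ∈ U, ContDiffAt ℝ ∞ (pd2 r) x := fun x hx => contDiffAt_pd2' (hr' x hx)
  have had : ∀ x ∈ U, DifferentiableAt ℝ (pd1 r) x := fun x hx =>
    (hac x hx).differentiableAt hle1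
  have hbd : ∀ x ∈ U, DifferentiableAt ℝ (pd2 r) x := fun x hx =>
    (hbc x hx).differentiableAt hle1
  have hA1pos : ∀ x ∈ U, 0 < A₁ r x := fun x hx => Real.sqrt_pos.2 (dot3_self_pos (hne1 x hx))
  have hA2pos : ∀ x ∈ U, 0 < A₂ r x := fun x hx => Real.sqrt_pos.2 (dot3_self_pos (hne2 x hx))
  have hA1ne : ∀ x ∈ U, A₁ r x ≠ 0 := fun x hx => ne_of_gt (hA1pos x hx)
  have hA2ne : ∀ x ∈ U, A₂ r x ≠ 0 := fun x hx => ne_of_gt (hA2pos x hx)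
  have hA1c : ∀ x ∈ U, ContDiffAt ℝ ∞ (A₁ r) x := fun x hx =>
    show ContDiffAt ℝ ∞ (fun y => Real.sqrt (dot3 (pd1 r y) (pd1 r y))) x from (Real.contDiffAt_sqrt (ne_of_gt (dot3_self_pos (hne1 x hx)))).comp x
      (contDiffAt_dot3 (hac x hx) (hac x hx))
  have hA2c : ∀ x ∈ U, ContDiffAt ℝ ∞ (A₂ r) x := fun x hx =>
    show ContDiffAt ℝ ∞ (fun y => Real.sqrt (dot3 (pd2 r y) (pd2 r y))) x from (Real.contDiffAt_sqrt (ne_of_gt (dot3_self_pos (hne2 x hx)))).comp x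
      (contDiffAt_dot3 (hbc x hx) (hbc x hx))
  have hA1d : ∀ x ∈ U, DifferentiableAt ℝ (A₁ r) x := fun x hx =>
    (hA1c x hx).differentiableAt hle1
  have hA2d : ∀ x ∈ U, DifferentiableAt ℝ (A₂ r) x := fun x hx =>
    (hA2c x hx).differentiableAt hle1
  have he1c : ∀ x ∈ U, ContDiffAt ℝ ∞ (e₁ r) x := fun x hx =>
    ((hA1c x hx).inv (hA1ne x hx)).smul (hac x hx)
  have he2c : ∀ x ∈ U, ContDiffAt ℝ ∞ (e₂ r) x := fun x hx =>
    ((hA2c x hx).inv (hA2ne x hx)).smul (hbc x hx)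
  have he1d : ∀ x ∈ U, DifferentiableAt ℝ (e₁ r) x := fun x hx =>
    (he1c x hx).differentiableAt hle1
  have he2d : ∀ x ∈ U, DifferentiableAt ℝ (e₂ r) x := fun x hx =>
    (he2c x hx).differentiableAt hle1
  have hnc : ∀ x ∈ U, ContDiffAt ℝ ∞ (NN r) x := fun x hx =>
    contDiffAt_cross3 (he1c x hx) (he2c x hx)
  have hnd : ∀ x ∈ U, DifferentiableAt ℝ (NN r) x := fun x hx =>
    (hnc x hx).differentiableAt hle1
  -- squared norms
  have hA1sq : ∀ y, A₁ r y * A₁ r y = dot3 (pd1 r y) (pd1 r y) := fun y =>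
    Real.mul_self_sqrt (dot3_self_nonneg _)
  have hA2sq : ∀ y, A₂ r y * A₂ r y = dot3 (pd2 r y) (pd2 r y) := fun y =>
    Real.mul_self_sqrt (dot3_self_nonneg _)
  -- derivative of A₁, A₂
  have hdA1 : ∀ x ∈ U, ∀ v, fderiv ℝ (A₁ r) x v * A₁ r x
      = dot3 (fderiv ℝ (pd1 r) x v) (pd1 r x) := by
    intro x hx v
    have h0 : (fun y => A₁ r y * A₁ r y) = fun y => dot3 (pd1 r y) (pd1 r y) := funext hA1sq
    have h1 : fderiv ℝ (fun y => A₁ r y * A₁ r y) x v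
        = fderiv ℝ (fun y => dot3 (pd1 r y) (pd1 r y)) x v := by rw [h0]
    rw [fderiv_mul_apply (hA1d x hx) (hA1d x hx), fderiv_dot3_apply (had x hx) (had x hx)] at h1
    have h2 : dot3 (pd1 r x) (fderiv ℝ (pd1 r) x v)
        = dot3 (fderiv ℝ (pd1 r) x v) (pd1 r x) := dot3_comm _ _
    have h3 := mul_comm (A₁ r x) (fderiv ℝ (A₁ r) x v)
    linarith
  have hdA2 : ∀ x ∈ U, ∀ v, fderiv ℝ (A₂ r) x v * A₂ r x
      = dot3 (fderiv ℝ (pd2 r) x v) (pd2 r x) := by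
    intro x hx v
    have h0 : (fun y => A₂ r y * A₂ r y) = fun y => dot3 (pd2 r y) (pd2 r y) := funext hA2sq
    have h1 : fderiv ℝ (fun y => A₂ r y * A₂ r y) x v
        = fderiv ℝ (fun y => dot3 (pd2 r y) (pd2 r y)) x v := by rw [h0]
    rw [fderiv_mul_apply (hA2d x hx) (hA2d x hx), fderiv_dot3_apply (hbd x hx) (hbd x hx)] at h1
    have h2 : dot3 (pd2 r x) (fderiv ℝ (pd2 r) x v)
        = dot3 (fderiv ℝ (pd2 r) x v) (pd2 r x) := dot3_comm _ _
    have h3 := mul_comm (A₂ r x) (fderiv ℝ (A₂ r) x v)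
    linarith
  -- derivative of constant dot products
  have hdotconst : ∀ (f g : ℝ × ℝ → V3) (cst : ℝ), (∀ y ∈ U, dot3 (f y) (g y) = cst) →
      ∀ x ∈ U, DifferentiableAt ℝ f x → DifferentiableAt ℝ g x → ∀ v,
      dot3 (fderiv ℝ f x v) (g x) + dot3 (f x) (fderiv ℝ g x v) = 0 := by
    intro f g cst h x hx hf hg v
    have he : (fun y => dot3 (f y) (g y)) =ᶠ[nhds x] fun _ => cst :=
      Filter.eventuallyEq_of_mem (hU.mem_nhds hx) (fun y hy => h y hy)
    have h2 := fderiv_dot3_apply hf hg v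
    rw [← h2, he.fderiv_eq]; simp
  -- frame algebra
  have haE1 : ∀ x ∈ U, pd1 r x = A₁ r x • e₁ r x := by
    intro x hx; rw [e₁, smul_smul, mul_inv_cancel₀ (hA1ne x hx), one_smul]
  have hbE2 : ∀ x ∈ U, pd2 r x = A₂ r x • e₂ r x := by
    intro x hx; rw [e₂, smul_smul, mul_inv_cancel₀ (hA2ne x hx), one_smul]
  have hE11 : ∀ x ∈ U, dot3 (e₁ r x) (e₁ r x) = 1 := by
    intro x hx
    rw [e₁, dot3_smul_left, dot3_smul_right, ← hA1sq x]
    field_simp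
    exact div_self (hA1ne x hx)
  have hE22 : ∀ x ∈ U, dot3 (e₂ r x) (e₂ r x) = 1 := by
    intro x hx
    rw [e₂, dot3_smul_left, dot3_smul_right, ← hA2sq x]
    field_simp
    exact div_self (hA2ne x hx)
  have hE12 : ∀ x ∈ U, dot3 (e₁ r x) (e₂ r x) = 0 := by
    intro x hx; rw [e₁, e₂, dot3_smul_left, dot3_smul_right, horth x hx]; ring
  have hnE1 : ∀ y, dot3 (NN r y) (e₁ r y) = 0 := fun y => cross3_dot_left _ _
  have hnE2 : ∀ y, dot3 (NN r y) (e₂ r y) = 0 := fun y => cross3_dot_right _ _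
  have han : ∀ y, dot3 (pd1 r y) (NN r y) = 0 := by
    intro y
    rw [NN, e₁, cross3_smul_left, dot3_smul_right, dot3_comm, cross3_dot_left]; ring
  have hbn : ∀ y, dot3 (pd2 r y) (NN r y) = 0 := by
    intro y
    rw [NN, e₂, cross3_smul_right, dot3_smul_right, dot3_comm, cross3_dot_right]; ring
  -- symmetry of second derivatives of r
  have hsymr : ∀ x ∈ U, fderiv ℝ (pd1 r) x (0, 1) = fderiv ℝ (pd2 r) x (1, 0) :=
    fun x hx => pd_symm (hr' x hx)
  -- differentiated orthogonality facts
  have hDan : ∀ x ∈ U, ∀ v, dot3 (fderiv ℝ (pd1 r) x v) (NN r x)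
      = - dot3 (pd1 r x) (fderiv ℝ (NN r) x v) := by
    intro x hx v
    have h := hdotconst (pd1 r) (NN r) 0 (fun y _ => han y) x hx (had x hx) (hnd x hx) v
    linarith
  have hDbn : ∀ x ∈ U, ∀ v, dot3 (fderiv ℝ (pd2 r) x v) (NN r x)
      = - dot3 (pd2 r x) (fderiv ℝ (NN r) x v) := by
    intro x hx v
    have h := hdotconst (pd2 r) (NN r) 0 (fun y _ => hbn y) x hx (hbd x hx) (hnd x hx) v
    linarith
  have hDab : ∀ x ∈ U, ∀ v, dot3 (fderiv ℝ (pd1 r) x v) (pd2 r x)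
      = - dot3 (pd1 r x) (fderiv ℝ (pd2 r) x v) := by
    intro x hx v
    have h := hdotconst (pd1 r) (pd2 r) 0 horth x hx (had x hx) (hbd x hx) v
    linarith
  have hDe11 : ∀ x ∈ U, ∀ v, dot3 (fderiv ℝ (e₁ r) x v) (e₁ r x) = 0 := by
    intro x hx v
    have h := hdotconst (e₁ r) (e₁ r) 1 hE11 x hx (he1d x hx) (he1d x hx) v
    have h2 : dot3 (e₁ r x) (fderiv ℝ (e₁ r) x v)
        = dot3 (fderiv ℝ (e₁ r) x v) (e₁ r x) := dot3_comm _ _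
    linarith
  have hDe22 : ∀ x ∈ U, ∀ v, dot3 (fderiv ℝ (e₂ r) x v) (e₂ r x) = 0 := by
    intro x hx v
    have h := hdotconst (e₂ r) (e₂ r) 1 hE22 x hx (he2d x hx) (he2d x hx) v
    have h2 : dot3 (e₂ r x) (fderiv ℝ (e₂ r) x v)
        = dot3 (fderiv ℝ (e₂ r) x v) (e₂ r x) := dot3_comm _ _
    linarith
  have hDe12 : ∀ x ∈ U, ∀ v, dot3 (e₁ r x) (fderiv ℝ (e₂ r) x v)
      = - dot3 (fderiv ℝ (e₁ r) x v) (e₂ r x) := by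
    intro x hx v
    have h := hdotconst (e₁ r) (e₂ r) 0 hE12 x hx (he1d x hx) (he2d x hx) v
    linarith
  -- derivative of A₁⁻¹, A₂⁻¹
  have hinv1d : ∀ x ∈ U, DifferentiableAt ℝ (fun y => (A₁ r y)⁻¹) x := fun x hx =>
    (hA1d x hx).inv (hA1ne x hx)
  have hinv2d : ∀ x ∈ U, DifferentiableAt ℝ (fun y => (A₂ r y)⁻¹) x := fun x hx =>
    (hA2d x hx).inv (hA2ne x hx)
  have hinvgen : ∀ (F : ℝ × ℝ → ℝ), (∀ y ∈ U, F y ≠ 0) →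
      (∀ x ∈ U, DifferentiableAt ℝ F x) → ∀ x ∈ U, ∀ v,
      fderiv ℝ (fun y => (F y)⁻¹) x v * (F x * F x) = - fderiv ℝ F x v := by
    intro F hFne hFd x hx v
    have he : (fun y => (F y)⁻¹ * F y) =ᶠ[nhds x] fun _ => 1 :=
      Filter.eventuallyEq_of_mem (hU.mem_nhds hx) (fun y hy => inv_mul_cancel₀ (hFne y hy))
    have h1 : fderiv ℝ (fun y => (F y)⁻¹ * F y) x v = 0 := by rw [he.fderiv_eq]; simp
    rw [fderiv_mul_apply (f := fun y => (F y)⁻¹) ((hFd x hx).inv (hFne x hx)) (hFd x hx)] at h1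
    have hne := hFne x hx
    have h2 : fderiv ℝ (fun y => (F y)⁻¹) x v * F x = -((F x)⁻¹ * fderiv ℝ F x v) := by
      linarith
    calc fderiv ℝ (fun y => (F y)⁻¹) x v * (F x * F x)
        = (fderiv ℝ (fun y => (F y)⁻¹) x v * F x) * F x := by ring
      _ = -((F x)⁻¹ * fderiv ℝ F x v) * F x := by rw [h2]
      _ = - fderiv ℝ F x v := by field_simp
  have hinv1 := hinvgen (A₁ r) hA1ne hA1d
  have hinv2 := hinvgen (A₂ r) hA2ne hA2d
  -- expansion of derivatives of e₁
  have hDe1 : ∀ x ∈ U, ∀ v, fderiv ℝ (e₁ r) x v =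
      (fderiv ℝ (fun y => (A₁ r y)⁻¹) x v) • pd1 r x + (A₁ r x)⁻¹ • fderiv ℝ (pd1 r) x v := by
    intro x hx v
    have h0 : e₁ r = fun y => (A₁ r y)⁻¹ • pd1 r y := rfl
    rw [h0, fderiv_smul_apply (hinv1d x hx) (had x hx)]
  -- auxiliary vanishing dot products
  have haE2dot : ∀ x ∈ U, dot3 (pd1 r x) (e₂ r x) = 0 := by
    intro x hx
    rw [show e₂ r x = (A₂ r x)⁻¹ • pd2 r x from rfl, dot3_smul_right, horth x hx]; ring
  -- the four key frame derivative dot products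
  have hs2 : ∀ x ∈ U, dot3 (fderiv ℝ (e₁ r) x (0, 1)) (e₂ r x) = qq r x := by
    intro x hx
    rw [hDe1 x hx (0, 1), dot3_add_left, dot3_smul_left, dot3_smul_left, haE2dot x hx,
      mul_zero, zero_add,
      show e₂ r x = (A₂ r x)⁻¹ • pd2 r x from rfl, dot3_smul_right, hsymr x hx,
      ← hdA2 x hx (1, 0)]
    simp only [qq, pd1_def]
    field_simp [hA1ne x hx, hA2ne x hx]
  have hs3 : ∀ x ∈ U, dot3 (fderiv ℝ (e₁ r) x (1, 0)) (e₂ r x) = -(pp r x) := by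
    intro x hx
    rw [hDe1 x hx (1, 0), dot3_add_left, dot3_smul_left, dot3_smul_left, haE2dot x hx,
      mul_zero, zero_add,
      show e₂ r x = (A₂ r x)⁻¹ • pd2 r x from rfl, dot3_smul_right,
      hDab x hx (1, 0), ← hsymr x hx, dot3_comm (pd1 r x), ← hdA1 x hx (0, 1)]
    simp only [pp, pd2_def]
    field_simp [hA1ne x hx, hA2ne x hx]
  have hs4 : ∀ x ∈ U, dot3 (fderiv ℝ (e₁ r) x (1, 0)) (NN r x) = κ₁ x * A₁ r x := by
    intro x hx
    rw [hDe1 x hx (1, 0), dot3_add_left, dot3_smul_left, dot3_smul_left, han x,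
      mul_zero, zero_add, hDan x hx (1, 0), ← pd1_def, hN1 x hx, dot3_smul_right, ← hA1sq x]
    field_simp [hA1ne x hx]
  have hs5 : ∀ x ∈ U, dot3 (fderiv ℝ (e₁ r) x (0, 1)) (NN r x) = 0 := by
    intro x hx
    rw [hDe1 x hx (0, 1), dot3_add_left, dot3_smul_left, dot3_smul_left, han x,
      mul_zero, zero_add, hDan x hx (0, 1), ← pd2_def, hN2 x hx, dot3_smul_right, horth x hx]
    ring
  -- vector form of the frame equations
  have hG4 : ∀ y ∈ U, fderiv ℝ (e₁ r) y (0, 1) = qq r y • e₂ r y := by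
    intro y hy
    have h := frame_decomp (hE11 y hy) (hE22 y hy) (hE12 y hy) (fderiv ℝ (e₁ r) y (0, 1))
    rw [show cross3 (e₁ r y) (e₂ r y) = NN r y from rfl, hDe11 y hy (0, 1), hs2 y hy,
      hs5 y hy] at h
    simpa using h
  have hG3 : ∀ y ∈ U, fderiv ℝ (e₁ r) y (1, 0)
      = (-(pp r y)) • e₂ r y + (-(Ho r κ₁ y)) • NN r y := by
    intro y hy
    have h := frame_decomp (hE11 y hy) (hE22 y hy) (hE12 y hy) (fderiv ℝ (e₁ r) y (1, 0))
    rw [show cross3 (e₁ r y) (e₂ r y) = NN r y from rfl, hDe11 y hy (1, 0), hs3 y hy,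
      hs4 y hy] at h
    rw [h]
    simp only [Ho, neg_mul, neg_neg, zero_smul, zero_add]
  have hG1 : ∀ y ∈ U, pd1 (NN r) y = Ho r κ₁ y • e₁ r y := by
    intro y hy
    rw [hN1 y hy, haE1 y hy, smul_smul]
    rfl
  have hG2 : ∀ y ∈ U, pd2 (NN r) y = Ko r κ₂ y • e₂ r y := by
    intro y hy
    rw [hN2 y hy, hbE2 y hy, smul_smul]
    rfl
  -- differentiability of the scalar coefficients
  have hHod : ∀ x ∈ U, DifferentiableAt ℝ (Ho r κ₁) x := fun x hx =>
    ((hk1 x hx).neg.mul (hA1c x hx)).differentiableAt hle1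
  have hKod : ∀ x ∈ U, DifferentiableAt ℝ (Ko r κ₂) x := fun x hx =>
    ((hk2 x hx).neg.mul (hA2c x hx)).differentiableAt hle1
  have hppd : ∀ x ∈ U, DifferentiableAt ℝ (pp r) x := fun x hx =>
    (((contDiffAt_pd2' (hA1c x hx)).div (hA2c x hx) (hA2ne x hx)).differentiableAt hle1)
  have hqqd : ∀ x ∈ U, DifferentiableAt ℝ (qq r) x := fun x hx =>
    (((contDiffAt_pd1' (hA2c x hx)).div (hA1c x hx) (hA1ne x hx)).differentiableAt hle1)
  -- main computation
  intro x hx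
  -- Codazzi equations
  have hsymN : fderiv ℝ (pd1 (NN r)) x (0, 1) = fderiv ℝ (pd2 (NN r)) x (1, 0) :=
    pd_symm (hnc x hx)
  have heL : pd1 (NN r) =ᶠ[nhds x] fun y => Ho r κ₁ y • e₁ r y :=
    Filter.eventuallyEq_of_mem (hU.mem_nhds hx) (fun y hy => hG1 y hy)
  have heR : pd2 (NN r) =ᶠ[nhds x] fun y => Ko r κ₂ y • e₂ r y :=
    Filter.eventuallyEq_of_mem (hU.mem_nhds hx) (fun y hy => hG2 y hy)
  have hEq : fderiv ℝ (Ho r κ₁) x (0, 1) • e₁ r x + Ho r κ₁ x • fderiv ℝ (e₁ r) x (0, 1)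
      = fderiv ℝ (Ko r κ₂) x (1, 0) • e₂ r x + Ko r κ₂ x • fderiv ℝ (e₂ r) x (1, 0) := by
    rw [← fderiv_smul_apply (hHod x hx) (he1d x hx) (0, 1),
      ← fderiv_smul_apply (hKod x hx) (he2d x hx) (1, 0), ← heL.fderiv_eq, ← heR.fderiv_eq]
    exact hsymN
  have hE21 : dot3 (e₂ r x) (e₁ r x) = 0 := (dot3_comm _ _).trans (hE12 x hx)
  have hs6 : dot3 (fderiv ℝ (e₂ r) x (1, 0)) (e₁ r x) = pp r x := by
    have h1 := hDe12 x hx (1, 0)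
    rw [hs3 x hx] at h1
    rw [dot3_comm]
    linarith
  have hcod1 : fderiv ℝ (Ho r κ₁) x (0, 1) = pp r x * Ko r κ₂ x := by
    have h := congrArg (fun w => dot3 w (e₁ r x)) hEq
    simp only [dot3_add_left, dot3_smul_left] at h
    rw [hE11 x hx, hDe11 x hx (0, 1), hE21, hs6] at h
    linarith
  have hs7 : dot3 (fderiv ℝ (e₂ r) x (1, 0)) (e₂ r x) = 0 := hDe22 x hx (1, 0)
  have hcod2 : fderiv ℝ (Ko r κ₂) x (1, 0) = qq r x * Ho r κ₁ x := by
    have h := congrArg (fun w => dot3 w (e₂ r x)) hEq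
    simp only [dot3_add_left, dot3_smul_left] at h
    rw [hE12 x hx, hs2 x hx, hE22 x hx, hs7] at h
    linarith
  -- Gauss equation
  have hsymE : fderiv ℝ (pd1 (e₁ r)) x (0, 1) = fderiv ℝ (pd2 (e₁ r)) x (1, 0) :=
    pd_symm (he1c x hx)
  have heL2 : pd1 (e₁ r) =ᶠ[nhds x] fun y => (-(pp r y)) • e₂ r y + (-(Ho r κ₁ y)) • NN r y :=
    Filter.eventuallyEq_of_mem (hU.mem_nhds hx) (fun y hy => hG3 y hy)
  have heR2 : pd2 (e₁ r) =ᶠ[nhds x] fun y => qq r y • e₂ r y :=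
    Filter.eventuallyEq_of_mem (hU.mem_nhds hx) (fun y hy => hG4 y hy)
  have hL2 : fderiv ℝ (pd1 (e₁ r)) x (0, 1) =
      ((-(fderiv ℝ (pp r) x (0, 1))) • e₂ r x + (-(pp r x)) • fderiv ℝ (e₂ r) x (0, 1)) +
      ((-(fderiv ℝ (Ho r κ₁) x (0, 1))) • NN r x + (-(Ho r κ₁ x)) • fderiv ℝ (NN r) x (0, 1)) := by
    rw [heL2.fderiv_eq]
    have d1 : DifferentiableAt ℝ (fun y => (-(pp r y)) • e₂ r y) x :=
      ((hppd x hx).neg).smul (he2d x hx)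
    have d2 : DifferentiableAt ℝ (fun y => (-(Ho r κ₁ y)) • NN r y) x :=
      ((hHod x hx).neg).smul (hnd x hx)
    rw [fderiv_fun_add d1 d2]
    simp only [ContinuousLinearMap.add_apply]
    rw [fderiv_smul_apply (f := fun y => -(pp r y)) ((hppd x hx).neg) (he2d x hx),
      fderiv_smul_apply (f := fun y => -(Ho r κ₁ y)) ((hHod x hx).neg) (hnd x hx), fderiv_fun_neg,
      fderiv_fun_neg]
    simp only [ContinuousLinearMap.neg_apply]
  have hR2 : fderiv ℝ (pd2 (e₁ r)) x (1, 0) =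
      fderiv ℝ (qq r) x (1, 0) • e₂ r x + qq r x • fderiv ℝ (e₂ r) x (1, 0) := by
    rw [heR2.fderiv_eq]
    exact fderiv_smul_apply (hqqd x hx) (he2d x hx) (1, 0)
  have hEq2 : ((-(fderiv ℝ (pp r) x (0, 1))) • e₂ r x + (-(pp r x)) • fderiv ℝ (e₂ r) x (0, 1)) +
      ((-(fderiv ℝ (Ho r κ₁) x (0, 1))) • NN r x + (-(Ho r κ₁ x)) • fderiv ℝ (NN r) x (0, 1))
      = fderiv ℝ (qq r) x (1, 0) • e₂ r x + qq r x • fderiv ℝ (e₂ r) x (1, 0) := by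
    rw [← hL2, ← hR2]; exact hsymE
  have hNdot : dot3 (fderiv ℝ (NN r) x (0, 1)) (e₂ r x) = Ko r κ₂ x := by
    rw [← pd2_def, hG2 x hx, dot3_smul_left, hE22 x hx, mul_one]
  have hgauss : -(fderiv ℝ (pp r) x (0, 1)) + (-(Ho r κ₁ x)) * Ko r κ₂ x
      = fderiv ℝ (qq r) x (1, 0) := by
    have h := congrArg (fun w => dot3 w (e₂ r x)) hEq2
    simp only [dot3_add_left, dot3_smul_left] at h
    rw [hE22 x hx, hDe22 x hx (0, 1), hDe22 x hx (1, 0), hnE2 x, hNdot] at h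
    linarith
  refine ⟨?_, ?_, ?_⟩
  · simp only [pd1_def, pd2_def]
    linarith
  · simp only [pd2_def]
    linarith [hcod1]
  · simp only [pd1_def]
    linarith [hcod2]
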